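/- Fix τ ∈ [T] and define f(Z; W_Q, W_K, W_V)[τ] = W_V^⊤ Z^⊤ softmax(Z W_K W_Q^⊤ z_τ) ∈ ℝ^k, where z_τ is the τ-th row of Z. Then for any W_Q, W_K, W_V ∈ ℝ^{d×k} and any Z, Ẑ ∈ ℝ^{T×d} with ‖Z^⊤‖_{2,∞} ≤ 1 and ‖Ẑ^⊤‖_{2,∞} ≤ 1, every row τ satisfies: ‖f(Z; W_Q, W_K, W_V)[τ] − f(Ẑ; W_Q, W_K, W_V)[τ]‖₂ ≤ ‖W_V‖₂·(1 + 4‖W_K W_Q^⊤‖₂)·‖(Z − Ẑ)^⊤‖_{2,∞}. -/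

import Mathlib

open Matrix
open scoped BigOperators

noncomputable section

/-- Euclidean (ℓ²) norm of a vector. -/
def norm2 {d : ℕ} (v : Fin d → ℝ) : ℝ := Real.sqrt (∑ i, (v i) ^ 2)

/-- The softmax map on ℝ^T. -/
def softmax {T : ℕ} (z : Fin T → ℝ) : Fin T → ℝ :=
  fun t => Real.exp (z t) / ∑ u, Real.exp (z u)

/-- Spectral norm (ℓ² operator norm) of a matrix. -/
def specNorm {a b : ℕ} (M : Matrix (Fin a) (Fin b) ℝ) : ℝ :=
  sSup {r : ℝ | ∃ v : Fin b → ℝ, norm2 v ≤ 1 ∧ r = norm2 (M *ᵥ v)}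

/-- `‖M‖_{2,∞}`: maximum ℓ² norm of a column of `M`. -/
def colMax2 {a b : ℕ} (M : Matrix (Fin a) (Fin b) ℝ) : ℝ :=
  ⨆ j, norm2 (fun i => M i j)

/-- Row `τ` of the self-attention layer output:
`f(Z; W_Q, W_K, W_V)[τ] = W_V^⊤ Z^⊤ softmax(Z W_K W_Q^⊤ z_τ)`. -/
noncomputable def attnRow {T d k : ℕ} (WQ WK WV : Matrix (Fin d) (Fin k) ℝ)
    (Z : Matrix (Fin T) (Fin d) ℝ) (τ : Fin T) : Fin k → ℝ :=
  fun j => ∑ t, softmax ((Z * WK * WQᵀ) *ᵥ Z τ) t * (Z * WV) t j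

lemma norm2_nonneg {d : ℕ} (v : Fin d → ℝ) : 0 ≤ norm2 v := Real.sqrt_nonneg _

lemma sq_norm2 {d : ℕ} (v : Fin d → ℝ) : norm2 v ^ 2 = ∑ i, (v i)^2 := by
  rw [norm2, Real.sq_sqrt]; positivity

lemma abs_dot_le_norm2 {d : ℕ} (v w : Fin d → ℝ) : |∑ i, v i * w i| ≤ norm2 v * norm2 w := by
  have h := Finset.sum_mul_sq_le_sq_mul_sq Finset.univ v w
  have := Real.sqrt_le_sqrt h
  rw [Real.sqrt_sq_eq_abs, Real.sqrt_mul (by positivity)] at this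
  exact this

lemma dot_le_norm2 {d : ℕ} (v w : Fin d → ℝ) : ∑ i, v i * w i ≤ norm2 v * norm2 w :=
  (le_abs_self _).trans (abs_dot_le_norm2 v w)

lemma norm2_smul {d : ℕ} (c : ℝ) (v : Fin d → ℝ) : norm2 (fun i => c * v i) = |c| * norm2 v := by
  simp only [norm2, mul_pow, ← Finset.mul_sum]
  rw [Real.sqrt_mul (sq_nonneg c), Real.sqrt_sq_eq_abs]

lemma norm2_add_le {d : ℕ} (v w : Fin d → ℝ) : norm2 (fun i => v i + w i) ≤ norm2 v + norm2 w := by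
  have h1 : norm2 (fun i => v i + w i) ^ 2 ≤ (norm2 v + norm2 w)^2 := by
    rw [sq_norm2]
    have : ∑ i, (v i + w i)^2 = ∑ i, (v i)^2 + 2 * (∑ i, v i * w i) + ∑ i, (w i)^2 := by
      rw [Finset.mul_sum, ← Finset.sum_add_distrib, ← Finset.sum_add_distrib]
      congr 1; ext i; ring
    rw [this]
    have h2 := dot_le_norm2 v w
    have h3 := sq_norm2 v
    have h4 := sq_norm2 w
    nlinarith
  have h0 : (0:ℝ) ≤ norm2 v + norm2 w := add_nonneg (norm2_nonneg v) (norm2_nonneg w)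
  have := Real.sqrt_le_sqrt h1
  rwa [Real.sqrt_sq_eq_abs, Real.sqrt_sq_eq_abs, abs_of_nonneg (norm2_nonneg _), abs_of_nonneg h0] at this

lemma norm2_congr {d : ℕ} {v w : Fin d → ℝ} (h : ∀ i, v i = w i) : norm2 v = norm2 w := by
  congr 1; exact funext h

lemma norm2_sum_le {d : ℕ} {ι : Type*} [DecidableEq ι] (s : Finset ι) (f : ι → Fin d → ℝ) :
    norm2 (fun i => ∑ t ∈ s, f t i) ≤ ∑ t ∈ s, norm2 (f t) := by
  induction s using Finset.induction_on with
  | empty => simp [norm2]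
  | insert a s' hx ih =>
    calc norm2 (fun i => ∑ t ∈ insert a s', f t i)
        = norm2 (fun i => f a i + ∑ t ∈ s', f t i) := norm2_congr (by
          intro i; rw [Finset.sum_insert hx])
      _ ≤ norm2 (f a) + norm2 (fun i => ∑ t ∈ s', f t i) := norm2_add_le _ _
      _ ≤ norm2 (f a) + ∑ t ∈ s', norm2 (f t) := by linarith
      _ = ∑ t ∈ insert a s', norm2 (f t) := by rw [Finset.sum_insert hx]

lemma norm2_eq_zero {d : ℕ} {v : Fin d → ℝ} (h : norm2 v = 0) : ∀ i, v i = 0 := by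
  intro i
  have hs : ∑ j, (v j)^2 = 0 := by
    have := congrArg (· ^ 2) h
    simpa [sq_norm2] using this
  have := Finset.sum_eq_zero_iff_of_nonneg (fun j _ => sq_nonneg (v j)) |>.1 hs i (Finset.mem_univ i)
  exact pow_eq_zero_iff (n := 2) (by norm_num) |>.1 this

lemma specSet_nonempty {a b : ℕ} (M : Matrix (Fin a) (Fin b) ℝ) :
    {r : ℝ | ∃ v : Fin b → ℝ, norm2 v ≤ 1 ∧ r = norm2 (M *ᵥ v)}.Nonempty := by
  refine ⟨norm2 (M *ᵥ 0), 0, ?_, rfl⟩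
  simp [norm2]

lemma specSet_bddAbove {a b : ℕ} (M : Matrix (Fin a) (Fin b) ℝ) :
    BddAbove {r : ℝ | ∃ v : Fin b → ℝ, norm2 v ≤ 1 ∧ r = norm2 (M *ᵥ v)} := by
  refine ⟨norm2 (fun i : Fin a => norm2 (fun j => M i j)), ?_⟩
  rintro r ⟨v, hv, rfl⟩
  have hb : ∀ i, (M *ᵥ v) i ^ 2 ≤ norm2 (fun j => M i j) ^ 2 := by
    intro i
    have h1 : |(M *ᵥ v) i| ≤ norm2 (fun j => M i j) * norm2 v := abs_dot_le_norm2 _ _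
    have h2 : norm2 (fun j => M i j) * norm2 v ≤ norm2 (fun j => M i j) * 1 :=
      mul_le_mul_of_nonneg_left hv (norm2_nonneg _)
    have h3 : |(M *ᵥ v) i| ≤ norm2 (fun j => M i j) := by
      simpa using h1.trans h2
    calc (M *ᵥ v) i ^ 2 = |(M *ᵥ v) i| ^ 2 := (sq_abs _).symm
      _ ≤ norm2 (fun j => M i j) ^ 2 := by
          apply pow_le_pow_left₀ (abs_nonneg _) h3
  rw [norm2, norm2]
  apply Real.sqrt_le_sqrt
  apply Finset.sum_le_sum (fun i _ => hb i)

lemma specNorm_nonneg {a b : ℕ} (M : Matrix (Fin a) (Fin b) ℝ) : 0 ≤ specNorm M := by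
  have : norm2 (M *ᵥ 0) ∈ {r : ℝ | ∃ v : Fin b → ℝ, norm2 v ≤ 1 ∧ r = norm2 (M *ᵥ v)} :=
    ⟨0, by simp [norm2], rfl⟩
  have h := le_csSup (specSet_bddAbove M) this
  exact (norm2_nonneg _).trans h

lemma norm2_mulVec_le {a b : ℕ} (M : Matrix (Fin a) (Fin b) ℝ) (v : Fin b → ℝ) :
    norm2 (M *ᵥ v) ≤ specNorm M * norm2 v := by
  rcases eq_or_lt_of_le (norm2_nonneg v) with h0 | h0
  · have hz : ∀ j, v j = 0 := norm2_eq_zero h0.symm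
    have hv : v = 0 := funext hz
    subst hv
    simp only [Matrix.mulVec_zero]
    rw [← h0]
    simp [norm2, mul_zero]
  · set c := norm2 v with hc
    have hu : norm2 (fun j => c⁻¹ * v j) ≤ 1 := by
      rw [norm2_smul, abs_of_pos (inv_pos.2 h0), inv_mul_cancel₀ (ne_of_gt h0)]
    have hmem : norm2 (M *ᵥ fun j => c⁻¹ * v j) ∈
        {r : ℝ | ∃ w : Fin b → ℝ, norm2 w ≤ 1 ∧ r = norm2 (M *ᵥ w)} :=
      ⟨_, hu, rfl⟩
    have hle := le_csSup (specSet_bddAbove M) hmem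
    have heq : norm2 (M *ᵥ fun j => c⁻¹ * v j) = c⁻¹ * norm2 (M *ᵥ v) := by
      have : (M *ᵥ fun j => c⁻¹ * v j) = fun i => c⁻¹ * (M *ᵥ v) i := by
        ext i
        simp [Matrix.mulVec, dotProduct, Finset.mul_sum]
        congr 1; ext j; ring
      rw [this, norm2_smul, abs_of_pos (inv_pos.2 h0)]
    rw [heq] at hle
    calc norm2 (M *ᵥ v) = c * (c⁻¹ * norm2 (M *ᵥ v)) := by
          field_simp
      _ ≤ c * specNorm M := mul_le_mul_of_nonneg_left hle (le_of_lt h0)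
      _ = specNorm M * c := mul_comm _ _

lemma norm2_transpose_mulVec_le {a b : ℕ} (M : Matrix (Fin a) (Fin b) ℝ) (v : Fin a → ℝ) :
    norm2 (Mᵀ *ᵥ v) ≤ specNorm M * norm2 v := by
  rcases eq_or_lt_of_le (norm2_nonneg (Mᵀ *ᵥ v)) with h0 | h0
  · rw [← h0]
    exact mul_nonneg (specNorm_nonneg M) (norm2_nonneg v)
  · have h2 : ∑ j, (Mᵀ *ᵥ v) j * (Mᵀ *ᵥ v) j = ∑ i, v i * (M *ᵥ (Mᵀ *ᵥ v)) i := by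
      have h := Matrix.dotProduct_mulVec v M (Mᵀ *ᵥ v)
      rw [Matrix.mulVec_transpose] at h ⊢
      exact h.symm
    have key : norm2 (Mᵀ *ᵥ v) ^ 2 ≤ norm2 v * (specNorm M * norm2 (Mᵀ *ᵥ v)) := by
      have h1 : norm2 (Mᵀ *ᵥ v) ^ 2 = ∑ j, (Mᵀ *ᵥ v) j * (Mᵀ *ᵥ v) j := by
        rw [sq_norm2]; apply Finset.sum_congr rfl; intros; ring
      have h3 : ∑ i, v i * (M *ᵥ (Mᵀ *ᵥ v)) i ≤ norm2 v * norm2 (M *ᵥ (Mᵀ *ᵥ v)) :=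
        dot_le_norm2 _ _
      have h4 : norm2 (M *ᵥ (Mᵀ *ᵥ v)) ≤ specNorm M * norm2 (Mᵀ *ᵥ v) := norm2_mulVec_le M _
      calc norm2 (Mᵀ *ᵥ v) ^ 2 = ∑ i, v i * (M *ᵥ (Mᵀ *ᵥ v)) i := by rw [h1, h2]
        _ ≤ norm2 v * norm2 (M *ᵥ (Mᵀ *ᵥ v)) := h3
        _ ≤ norm2 v * (specNorm M * norm2 (Mᵀ *ᵥ v)) :=
            mul_le_mul_of_nonneg_left h4 (norm2_nonneg v)
    have h5 : norm2 (Mᵀ *ᵥ v) * norm2 (Mᵀ *ᵥ v) ≤ (specNorm M * norm2 v) * norm2 (Mᵀ *ᵥ v) := by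
      nlinarith
    exact le_of_mul_le_mul_right h5 h0

lemma colMax2_nonneg {a b : ℕ} (M : Matrix (Fin a) (Fin b) ℝ) : 0 ≤ colMax2 M :=
  Real.iSup_nonneg (fun j => norm2_nonneg _)

lemma col_le_colMax2 {a b : ℕ} (M : Matrix (Fin a) (Fin b) ℝ) (j : Fin b) :
    norm2 (fun i => M i j) ≤ colMax2 M :=
  le_ciSup (f := fun j => norm2 (fun i => M i j))
    (Set.Finite.bddAbove (Set.finite_range _)) j

lemma softmax_nonneg {T : ℕ} (z : Fin T → ℝ) (t : Fin T) : 0 ≤ softmax z t := by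
  apply div_nonneg (Real.exp_nonneg _)
  exact Finset.sum_nonneg fun u _ => Real.exp_nonneg _

lemma expsum_pos {T : ℕ} [NeZero T] (z : Fin T → ℝ) : 0 < ∑ u, Real.exp (z u) :=
  Finset.sum_pos (fun u _ => Real.exp_pos _) (Finset.univ_nonempty)

lemma softmax_sum_one {T : ℕ} [NeZero T] (z : Fin T → ℝ) : ∑ t, softmax z t = 1 := by
  simp only [softmax]
  rw [← Finset.sum_div]
  exact div_self (ne_of_gt (expsum_pos z))

/-- The logistic sigmoid. -/
def sigmoid (t : ℝ) : ℝ := Real.exp t / (Real.exp t + 1)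

lemma sigmoid_hasDerivAt (t : ℝ) :
    HasDerivAt sigmoid (Real.exp t / (Real.exp t + 1)^2) t := by
  have h1 : HasDerivAt (fun t => Real.exp t) (Real.exp t) t := Real.hasDerivAt_exp t
  have h2 : HasDerivAt (fun t => Real.exp t + 1) (Real.exp t) t := h1.add_const 1
  have hne : Real.exp t + 1 ≠ 0 := by positivity
  have := h1.div h2 hne
  have e : sigmoid = (fun t => Real.exp t) / fun t => Real.exp t + 1 := by funext x; rfl
  rw [e]
  exact this.congr_deriv (by ring)

lemma sigmoid_lipschitz (s t : ℝ) : |sigmoid s - sigmoid t| ≤ |s - t| / 4 := by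
  have hdiff : Differentiable ℝ sigmoid := fun x => (sigmoid_hasDerivAt x).differentiableAt
  have hbound : ∀ x, ‖deriv sigmoid x‖₊ ≤ (4⁻¹ : NNReal) := by
    intro x
    rw [(sigmoid_hasDerivAt x).deriv]
    have h1 : Real.exp x / (Real.exp x + 1)^2 ≤ 1/4 := by
      rw [div_le_div_iff₀ (by positivity) (by norm_num)]
      nlinarith [sq_nonneg (Real.exp x - 1), Real.exp_pos x]
    have h0 : (0:ℝ) ≤ Real.exp x / (Real.exp x + 1)^2 := by positivity
    rw [← NNReal.coe_le_coe]
    simp only [coe_nnnorm, Real.norm_eq_abs, abs_of_nonneg h0]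
    norm_num
    linarith
  have := lipschitzWith_of_nnnorm_deriv_le hdiff hbound
  have h := this.dist_le_mul s t
  rw [Real.dist_eq, Real.dist_eq] at h
  calc |sigmoid s - sigmoid t| ≤ (4⁻¹ : NNReal) * |s - t| := h
    _ = |s - t| / 4 := by norm_num; ring

lemma log_ratio_abs_le {C C' δ : ℝ} (hC : 0 < C) (hC' : 0 < C')
    (h1 : C ≤ Real.exp δ * C') (h2 : C' ≤ Real.exp δ * C) :
    |Real.log C - Real.log C'| ≤ δ := by
  rw [abs_le]
  constructor
  · have := Real.log_le_log hC' h2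
    rw [Real.log_mul (Real.exp_ne_zero δ) (ne_of_gt hC), Real.log_exp] at this
    linarith
  · have := Real.log_le_log hC h1
    rw [Real.log_mul (Real.exp_ne_zero δ) (ne_of_gt hC'), Real.log_exp] at this
    linarith

lemma expsum_le {ι : Type*} (s : Finset ι) (x y : ι → ℝ) (δ : ℝ)
    (h : ∀ t, x t - y t ≤ δ) :
    ∑ t ∈ s, Real.exp (x t) ≤ Real.exp δ * ∑ t ∈ s, Real.exp (y t) := by
  rw [Finset.mul_sum]
  apply Finset.sum_le_sum
  intro t _
  rw [← Real.exp_add]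
  apply Real.exp_le_exp.2
  linarith [h t]

lemma sigmoid_eq_ratio {A B : ℝ} (hA : 0 < A) (hB : 0 < B) :
    sigmoid (Real.log A - Real.log B) = A / (A + B) := by
  rw [sigmoid, Real.exp_sub, Real.exp_log hA, Real.exp_log hB]
  field_simp

lemma softmax_l1 {T : ℕ} [NeZero T] (x y : Fin T → ℝ) (δ : ℝ)
    (hδ : ∀ t, |x t - y t| ≤ δ) :
    ∑ t, |softmax x t - softmax y t| ≤ 2 * δ := by
  have hδ0 : 0 ≤ δ := le_trans (abs_nonneg _) (hδ (Classical.arbitrary (Fin T)))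
  set p := softmax x with hp
  set q := softmax y with hq
  set S : Finset (Fin T) := Finset.univ.filter (fun t => q t < p t) with hS
  have hsplit : ∑ t, |p t - q t| =
      ∑ t ∈ S, |p t - q t| + ∑ t ∈ Finset.univ.filter (fun t => ¬ q t < p t), |p t - q t| :=
    (Finset.sum_filter_add_sum_filter_not _ _ _).symm
  have hS1 : ∑ t ∈ S, |p t - q t| = ∑ t ∈ S, (p t - q t) := by
    apply Finset.sum_congr rfl
    intro t ht
    rw [hS, Finset.mem_filter] at ht
    exact abs_of_pos (sub_pos.2 ht.2)
  have hS2 : ∑ t ∈ Finset.univ.filter (fun t => ¬ q t < p t), |p t - q t| =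
      ∑ t ∈ Finset.univ.filter (fun t => ¬ q t < p t), (q t - p t) := by
    apply Finset.sum_congr rfl
    intro t ht
    rw [Finset.mem_filter] at ht
    rw [abs_of_nonpos (by linarith [not_lt.1 ht.2]), neg_sub]
  have hsum0 : ∑ t ∈ S, (p t - q t) +
      ∑ t ∈ Finset.univ.filter (fun t => ¬ q t < p t), (p t - q t) = 0 := by
    rw [Finset.sum_filter_add_sum_filter_not]
    simp only [Finset.sum_sub_distrib]
    rw [hp, hq, softmax_sum_one, softmax_sum_one]
    ring
  have hS2' : ∑ t ∈ Finset.univ.filter (fun t => ¬ q t < p t), (q t - p t)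
      = ∑ t ∈ S, (p t - q t) := by
    have : ∑ t ∈ Finset.univ.filter (fun t => ¬ q t < p t), (q t - p t)
        = - ∑ t ∈ Finset.univ.filter (fun t => ¬ q t < p t), (p t - q t) := by
      rw [← Finset.sum_neg_distrib]
      apply Finset.sum_congr rfl; intros; ring
    rw [this]; linarith
  have htotal : ∑ t, |p t - q t| = 2 * ∑ t ∈ S, (p t - q t) := by
    rw [hsplit, hS1, hS2, hS2']; ring
  rw [htotal]
  -- now bound ∑_S (p - q) ≤ δ
  have hmain : ∑ t ∈ S, (p t - q t) ≤ δ := by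
    rcases Finset.eq_empty_or_nonempty S with hSe | hSne
    · simp [hSe, hδ0]
    rcases Finset.eq_empty_or_nonempty (Finset.univ.filter (fun t => ¬ q t < p t)) with hCe | hCne
    · -- S = univ : sum is 0
      have : ∑ t ∈ S, (p t - q t) = 0 := by
        rw [hCe] at hsum0; simpa using hsum0
      linarith
    · set A := ∑ t ∈ S, Real.exp (x t) with hA
      set B := ∑ t ∈ Finset.univ.filter (fun t => ¬ q t < p t), Real.exp (x t) with hB
      set A' := ∑ t ∈ S, Real.exp (y t) with hA'
      set B' := ∑ t ∈ Finset.univ.filter (fun t => ¬ q t < p t), Real.exp (y t) with hB'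
      have hApos : 0 < A := Finset.sum_pos (fun t _ => Real.exp_pos _) hSne
      have hBpos : 0 < B := Finset.sum_pos (fun t _ => Real.exp_pos _) hCne
      have hA'pos : 0 < A' := Finset.sum_pos (fun t _ => Real.exp_pos _) hSne
      have hB'pos : 0 < B' := Finset.sum_pos (fun t _ => Real.exp_pos _) hCne
      have hPx : ∑ t ∈ S, p t = A / (A + B) := by
        have hAB : A + B = ∑ t, Real.exp (x t) := by
          rw [hA, hB, Finset.sum_filter_add_sum_filter_not]
        rw [hp]
        simp only [softmax]
        rw [← Finset.sum_div, ← hAB]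
      have hQy : ∑ t ∈ S, q t = A' / (A' + B') := by
        have hAB : A' + B' = ∑ t, Real.exp (y t) := by
          rw [hA', hB', Finset.sum_filter_add_sum_filter_not]
        rw [hq]
        simp only [softmax]
        rw [← Finset.sum_div, ← hAB]
      have hsig1 : ∑ t ∈ S, p t = sigmoid (Real.log A - Real.log B) := by
        rw [hPx, sigmoid_eq_ratio hApos hBpos]
      have hsig2 : ∑ t ∈ S, q t = sigmoid (Real.log A' - Real.log B') := by
        rw [hQy, sigmoid_eq_ratio hA'pos hB'pos]
      have hlogA : |Real.log A - Real.log A'| ≤ δ := by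
        apply log_ratio_abs_le hApos hA'pos
        · exact expsum_le _ x y δ (fun t => (abs_le.1 (hδ t)).2)
        · exact expsum_le _ y x δ (fun t => by linarith [(abs_le.1 (hδ t)).1])
      have hlogB : |Real.log B - Real.log B'| ≤ δ := by
        apply log_ratio_abs_le hBpos hB'pos
        · exact expsum_le _ x y δ (fun t => (abs_le.1 (hδ t)).2)
        · exact expsum_le _ y x δ (fun t => by linarith [(abs_le.1 (hδ t)).1])
      have harg : |(Real.log A - Real.log B) - (Real.log A' - Real.log B')| ≤ 2 * δ := by
        have : (Real.log A - Real.log B) - (Real.log A' - Real.log B')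
            = (Real.log A - Real.log A') - (Real.log B - Real.log B') := by ring
        rw [this]
        calc |(Real.log A - Real.log A') - (Real.log B - Real.log B')|
            ≤ |Real.log A - Real.log A'| + |Real.log B - Real.log B'| := abs_sub _ _
          _ ≤ 2 * δ := by linarith
      have hlip := sigmoid_lipschitz (Real.log A - Real.log B) (Real.log A' - Real.log B')
      have : ∑ t ∈ S, (p t - q t) = ∑ t ∈ S, p t - ∑ t ∈ S, q t := Finset.sum_sub_distrib _ _
      rw [this, hsig1, hsig2]
      calc sigmoid (Real.log A - Real.log B) - sigmoid (Real.log A' - Real.log B')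
          ≤ |sigmoid (Real.log A - Real.log B) - sigmoid (Real.log A' - Real.log B')| :=
            le_abs_self _
        _ ≤ |(Real.log A - Real.log B) - (Real.log A' - Real.log B')| / 4 := hlip
        _ ≤ (2 * δ) / 4 := by linarith
        _ ≤ δ := by linarith
  linarith


/-- Lipschitzness of a self-attention row in the input `Z`. -/
theorem attention_lipschitz_in_input {T d k : ℕ}
    (WQ WK WV : Matrix (Fin d) (Fin k) ℝ)
    (Z Z' : Matrix (Fin T) (Fin d) ℝ)
    (hZ : colMax2 Zᵀ ≤ 1) (hZ' : colMax2 Z'ᵀ ≤ 1) (τ : Fin T) :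
    norm2 (fun j => attnRow WQ WK WV Z τ j - attnRow WQ WK WV Z' τ j) ≤
      specNorm WV * (1 + 4 * specNorm (WK * WQᵀ)) * colMax2 ((Z - Z')ᵀ) := by
  have hT : 0 < T := τ.pos
  haveI : NeZero T := ⟨hT.ne'⟩
  set A := WK * WQᵀ with hA
  set s : Fin T → ℝ := softmax ((Z * WK * WQᵀ) *ᵥ Z τ) with hs
  set s' : Fin T → ℝ := softmax ((Z' * WK * WQᵀ) *ᵥ Z' τ) with hs'
  set ε := colMax2 ((Z - Z')ᵀ) with hε
  set cA := specNorm A with hcA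
  set cV := specNorm WV with hcV
  have hε0 : 0 ≤ ε := colMax2_nonneg _
  have hcA0 : 0 ≤ cA := specNorm_nonneg _
  have hcV0 : 0 ≤ cV := specNorm_nonneg _
  -- row norms
  have hrowZ : ∀ t : Fin T, norm2 (Z t) ≤ 1 := fun t => (col_le_colMax2 Zᵀ t).trans hZ
  have hrowZ' : ∀ t : Fin T, norm2 (Z' t) ≤ 1 := fun t => (col_le_colMax2 Z'ᵀ t).trans hZ'
  have hrowD : ∀ t : Fin T, norm2 (fun i => Z t i - Z' t i) ≤ ε := by
    intro t
    have := col_le_colMax2 ((Z - Z')ᵀ) t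
    have he : (fun i => ((Z - Z')ᵀ) i t) = fun i => Z t i - Z' t i := by
      funext i; simp [Matrix.transpose_apply, Matrix.sub_apply]
    rwa [he] at this
  -- entrywise bound on softmax arguments
  have hentry : ∀ t : Fin T,
      |((Z * WK * WQᵀ) *ᵥ Z τ) t - ((Z' * WK * WQᵀ) *ᵥ Z' τ) t| ≤ 2 * cA * ε := by
    intro t
    have hx : ((Z * WK * WQᵀ) *ᵥ Z τ) t = ∑ i, Z t i * (A *ᵥ Z τ) i := by
      rw [Matrix.mul_assoc, ← hA, ← Matrix.mulVec_mulVec]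
      rfl
    have hy : ((Z' * WK * WQᵀ) *ᵥ Z' τ) t = ∑ i, Z' t i * (A *ᵥ Z' τ) i := by
      rw [Matrix.mul_assoc, ← hA, ← Matrix.mulVec_mulVec]
      rfl
    have hdec : ((Z * WK * WQᵀ) *ᵥ Z τ) t - ((Z' * WK * WQᵀ) *ᵥ Z' τ) t
        = (∑ i, (Z t i - Z' t i) * (A *ᵥ Z τ) i)
          + ∑ i, Z' t i * (A *ᵥ (fun i' => Z τ i' - Z' τ i')) i := by
      rw [hx, hy]
      have hlin : (A *ᵥ (fun i' => Z τ i' - Z' τ i')) = fun i => (A *ᵥ Z τ) i - (A *ᵥ Z' τ) i := by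
        funext i
        simp [Matrix.mulVec, dotProduct, mul_sub, Finset.sum_sub_distrib]
      rw [hlin]
      rw [← Finset.sum_add_distrib, ← Finset.sum_sub_distrib]
      apply Finset.sum_congr rfl; intros; ring
    rw [hdec]
    have h1 : |∑ i, (Z t i - Z' t i) * (A *ᵥ Z τ) i| ≤ ε * (cA * 1) := by
      calc |∑ i, (Z t i - Z' t i) * (A *ᵥ Z τ) i|
          ≤ norm2 (fun i => Z t i - Z' t i) * norm2 (A *ᵥ Z τ) := abs_dot_le_norm2 _ _
        _ ≤ ε * (cA * 1) := by
            apply mul_le_mul (hrowD t) ?_ (norm2_nonneg _) hε0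
            calc norm2 (A *ᵥ Z τ) ≤ cA * norm2 (Z τ) := norm2_mulVec_le A _
              _ ≤ cA * 1 := mul_le_mul_of_nonneg_left (hrowZ τ) hcA0
    have h2 : |∑ i, Z' t i * (A *ᵥ (fun i' => Z τ i' - Z' τ i')) i| ≤ 1 * (cA * ε) := by
      calc |∑ i, Z' t i * (A *ᵥ (fun i' => Z τ i' - Z' τ i')) i|
          ≤ norm2 (Z' t) * norm2 (A *ᵥ (fun i' => Z τ i' - Z' τ i')) := abs_dot_le_norm2 _ _
        _ ≤ 1 * (cA * ε) := by
            apply mul_le_mul (hrowZ' t) ?_ (norm2_nonneg _) (by norm_num)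
            calc norm2 (A *ᵥ (fun i' => Z τ i' - Z' τ i'))
                ≤ cA * norm2 (fun i' => Z τ i' - Z' τ i') := norm2_mulVec_le A _
              _ ≤ cA * ε := mul_le_mul_of_nonneg_left (hrowD τ) hcA0
    calc |(∑ i, (Z t i - Z' t i) * (A *ᵥ Z τ) i)
          + ∑ i, Z' t i * (A *ᵥ (fun i' => Z τ i' - Z' τ i')) i|
        ≤ |∑ i, (Z t i - Z' t i) * (A *ᵥ Z τ) i|
          + |∑ i, Z' t i * (A *ᵥ (fun i' => Z τ i' - Z' τ i')) i| := abs_add_le _ _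
      _ ≤ ε * (cA * 1) + 1 * (cA * ε) := add_le_add h1 h2
      _ = 2 * cA * ε := by ring
  -- ℓ1 bound on softmax difference
  have hl1 : ∑ t, |s t - s' t| ≤ 2 * (2 * cA * ε) :=
    softmax_l1 _ _ _ hentry
  -- rewrite the difference as WVᵀ *ᵥ u
  set u : Fin d → ℝ := fun i => ∑ t, (s t * Z t i - s' t * Z' t i) with hu
  have hrw : (fun j => attnRow WQ WK WV Z τ j - attnRow WQ WK WV Z' τ j)
      = WVᵀ *ᵥ u := by
    funext j
    show (∑ t, s t * (Z * WV) t j) - (∑ t, s' t * (Z' * WV) t j) = (WVᵀ *ᵥ u) j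
    have hL : (∑ t, s t * (Z * WV) t j) - (∑ t, s' t * (Z' * WV) t j)
        = ∑ t, ∑ i, (s t * Z t i * WV i j - s' t * Z' t i * WV i j) := by
      rw [← Finset.sum_sub_distrib]
      apply Finset.sum_congr rfl; intro t _
      rw [Matrix.mul_apply, Matrix.mul_apply, Finset.mul_sum, Finset.mul_sum,
        ← Finset.sum_sub_distrib]
      apply Finset.sum_congr rfl; intros; ring
    have hR : (WVᵀ *ᵥ u) j = ∑ i, ∑ t, (s t * Z t i * WV i j - s' t * Z' t i * WV i j) := by
      show ∑ i, WVᵀ j i * u i = _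
      apply Finset.sum_congr rfl; intro i _
      rw [Matrix.transpose_apply, hu]
      simp only [Finset.mul_sum]
      apply Finset.sum_congr rfl; intro t _
      ring
    rw [hL, hR, Finset.sum_comm]
  rw [hrw]
  -- split u
  have husplit : norm2 u ≤ ε + 2 * (2 * cA * ε) := by
    have hdecomp : u = fun i => (∑ t, s t * (Z t i - Z' t i)) + ∑ t, (s t - s' t) * Z' t i := by
      funext i
      rw [hu]
      rw [← Finset.sum_add_distrib]
      apply Finset.sum_congr rfl; intros; ring
    rw [hdecomp]
    have hv1 : norm2 (fun i => ∑ t, s t * (Z t i - Z' t i)) ≤ ε := by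
      calc norm2 (fun i => ∑ t, s t * (Z t i - Z' t i))
          ≤ ∑ t, norm2 (fun i => s t * (Z t i - Z' t i)) :=
            norm2_sum_le Finset.univ (fun t i => s t * (Z t i - Z' t i))
        _ ≤ ∑ t, s t * ε := by
            apply Finset.sum_le_sum
            intro t _
            rw [norm2_smul, abs_of_nonneg (softmax_nonneg _ t)]
            exact mul_le_mul_of_nonneg_left (hrowD t) (softmax_nonneg _ t)
        _ = ε := by rw [← Finset.sum_mul, hs, softmax_sum_one, one_mul]
    have hv2 : norm2 (fun i => ∑ t, (s t - s' t) * Z' t i) ≤ 2 * (2 * cA * ε) := by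
      calc norm2 (fun i => ∑ t, (s t - s' t) * Z' t i)
          ≤ ∑ t, norm2 (fun i => (s t - s' t) * Z' t i) :=
            norm2_sum_le Finset.univ (fun t i => (s t - s' t) * Z' t i)
        _ ≤ ∑ t, |s t - s' t| * 1 := by
            apply Finset.sum_le_sum
            intro t _
            rw [norm2_smul]
            exact mul_le_mul_of_nonneg_left (hrowZ' t) (abs_nonneg _)
        _ = ∑ t, |s t - s' t| := by simp
        _ ≤ 2 * (2 * cA * ε) := hl1
    calc norm2 (fun i => (∑ t, s t * (Z t i - Z' t i)) + ∑ t, (s t - s' t) * Z' t i)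
        ≤ norm2 (fun i => ∑ t, s t * (Z t i - Z' t i))
          + norm2 (fun i => ∑ t, (s t - s' t) * Z' t i) := norm2_add_le _ _
      _ ≤ ε + 2 * (2 * cA * ε) := add_le_add hv1 hv2
  calc norm2 (WVᵀ *ᵥ u) ≤ cV * norm2 u := norm2_transpose_mulVec_le WV u
    _ ≤ cV * (ε + 2 * (2 * cA * ε)) := mul_le_mul_of_nonneg_left husplit hcV0
    _ = cV * (1 + 4 * cA) * ε := by ring
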